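/- arXiv:1905.13228 — 2 statements merged into one kernel-verified Lean document; each statement's English description precedes it below -/
import Mathlib

section
/- Let G be a finite bipartite graph with bipartition (U, W) that is (d_u, d_w)-regular, let {X_1, …, X_ℓ, Y} be a Godsil–McKay switching partition of its vertex set, and let G' be the switched graph. Then G' is also a (d_u, d_w)-regular bipartite graph with the same degree sequences as G; precisely, there is a partition (U', W') of the vertex set with |U'| = |U| and |W'| = |W| such that every edge of G' joins a vertex of U' to a vertex of W', every vertex of U' has degree d_u in G', and every vertex of W' has degree d_w in G'. -/
/-!
Call the vertices `y ∈ Y` with exactly `|X_i|/2` neighbours in `X_i` the flip set of `X_i`. Two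
vertices of the same part `X_i` have the same number of neighbours in every `X_j` and the same
neighbours among the `y ∈ Y` outside the flip set, so their degrees differ exactly as their
numbers of neighbours in the flip set do.

If the flip set of `X_i` is nonempty, `X_i` lies inside one side or is cut in half by `U`.
Otherwise, say a flipping `y` lies in `W`, so that `|U ∩ X_i| > |W ∩ X_i| > 0`: comparing a
neighbour of `y` in `X_i` with a vertex of `W ∩ X_i` gives `dw < du`. That vertex of `W ∩ X_i`
has a neighbour in some part `X_j`, and double counting the edges between the two parts gives
`|U ∩ X_i| |U ∩ X_j| = |W ∩ X_i| |W ∩ X_j|`. So `|U ∩ X_j| < |W ∩ X_j|`, and then no vertex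
of `U ∩ X_j` has a neighbour in the flip set of `X_j`, which gives `du ≤ dw`.

A part inside one side keeps all its degrees: double counting the edges between the part and its
flip set shows that each of its vertices is adjacent to exactly half of the flip set. In a part
cut in half, each flipping `y` is adjacent to the whole half of `X_i` on the other side. So
switching moves such a part to the other side. The new bipartition is `U ∆ B`, `W ∆ B`, where `B`
is the union of the parts cut in half.
-/

open Finset SimpleGraph Polynomial

open scoped Classical in
/-- Number of neighbors of `v` inside the finset `S`, in the graph `G`. -/
noncomputable def nbrsIn {V : Type*} (G : SimpleGraph V) (v : V) (S : Finset V) : ℕ :=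
  (S.filter (fun w => G.Adj v w)).card

/-- The `i`-th part `X_i` of a partition of the vertex set encoded by `f`
(`f v = some i` means `v ∈ X_i`, and `f v = none` means `v ∈ Y`). -/
def Xset {V : Type*} [Fintype V] {ℓ : ℕ} (f : V → Option (Fin ℓ)) (i : Fin ℓ) : Finset V :=
  Finset.univ.filter (fun v => f v = some i)

/-- The part `Y` of the partition of the vertex set encoded by `f`. -/
def Yset {V : Type*} [Fintype V] {ℓ : ℕ} (f : V → Option (Fin ℓ)) : Finset V :=
  Finset.univ.filter (fun v => f v = none)

/-- The partition `{X_1, …, X_ℓ, Y}` (encoded by `f`) is a Godsil–McKay switching partition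
of `G`: every `y ∈ Y` has `0`, `|X_i|/2` or `|X_i|` neighbors in each `X_i`, and for all `i, j`,
all vertices of `X_i` have the same number of neighbors in `X_j`. -/
def IsGMPartition {V : Type*} [Fintype V] (G : SimpleGraph V) {ℓ : ℕ}
    (f : V → Option (Fin ℓ)) : Prop :=
  (∀ y ∈ Yset f, ∀ i : Fin ℓ,
      nbrsIn G y (Xset f i) = 0 ∨ 2 * nbrsIn G y (Xset f i) = (Xset f i).card ∨
        nbrsIn G y (Xset f i) = (Xset f i).card) ∧
  (∀ i j : Fin ℓ, ∀ u ∈ Xset f i, ∀ v ∈ Xset f i,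
      nbrsIn G u (Xset f j) = nbrsIn G v (Xset f j))

/-- The pairs of vertices whose adjacency is flipped by the Godsil–McKay switching:
one of them lies in `Y`, the other in some `X_i`, and the former has exactly `|X_i|/2`
neighbors in `X_i`. -/
def gmFlip {V : Type*} [Fintype V] (G : SimpleGraph V) {ℓ : ℕ} (f : V → Option (Fin ℓ))
    (u v : V) : Prop :=
  (∃ i : Fin ℓ, f u = none ∧ f v = some i ∧ 2 * nbrsIn G u (Xset f i) = (Xset f i).card) ∨
  (∃ i : Fin ℓ, f v = none ∧ f u = some i ∧ 2 * nbrsIn G v (Xset f i) = (Xset f i).card)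

/-- The Godsil–McKay switched graph `G'`: adjacency within `X_1 ∪ … ∪ X_ℓ`, or within `Y`,
is as in `G`; adjacency between `y ∈ Y` and `x ∈ X_i` is complemented exactly when `y` has
`|X_i|/2` neighbors in `X_i` in `G`. -/
def gmSwitch {V : Type*} [Fintype V] (G : SimpleGraph V) {ℓ : ℕ} (f : V → Option (Fin ℓ)) :
    SimpleGraph V where
  Adj u v := (gmFlip G f u v ∧ ¬ G.Adj u v ∧ u ≠ v) ∨ (¬ gmFlip G f u v ∧ G.Adj u v)
  symm := by
    constructor
    intro u v h
    have hsymm : gmFlip G f u v ↔ gmFlip G f v u := ⟨Or.symm, Or.symm⟩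
    rcases h with ⟨h1, h2, h3⟩ | ⟨h1, h2⟩
    · exact Or.inl ⟨hsymm.mp h1, fun h => h2 (G.adj_symm h), h3.symm⟩
    · exact Or.inr ⟨fun h => h1 (hsymm.mpr h), G.adj_symm h2⟩
  loopless := by
    constructor
    intro u h
    rcases h with ⟨_, _, h3⟩ | ⟨_, h2⟩
    · exact h3 rfl
    · exact G.irrefl h2

/-- `(U, W)` is a bipartition of the vertex set of `G` witnessing that `G` is a
`(du, dw)`-regular bipartite graph: every edge joins `U` to `W`, every vertex of `U` has
degree `du`, and every vertex of `W` has degree `dw`. -/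
def IsBiRegularBipartition {V : Type*} [Fintype V] [DecidableEq V] (G : SimpleGraph V)
    (U W : Finset V) (du dw : ℕ) : Prop :=
  U ∪ W = Finset.univ ∧ U ∩ W = ∅ ∧
  (∀ u v, G.Adj u v → (u ∈ U ∧ v ∈ W) ∨ (u ∈ W ∧ v ∈ U)) ∧
  (∀ u ∈ U, nbrsIn G u Finset.univ = du) ∧
  (∀ w ∈ W, nbrsIn G w Finset.univ = dw)
section NbrsIn

variable {V : Type*} (G : SimpleGraph V)

theorem nbrsIn_le_card (v : V) (S : Finset V) : nbrsIn G v S ≤ #S := by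
  classical
  exact card_filter_le _ _

theorem nbrsIn_eq_zero_iff {v : V} {S : Finset V} : nbrsIn G v S = 0 ↔ ∀ w ∈ S, ¬ G.Adj v w := by
  simp [nbrsIn, filter_eq_empty_iff]

theorem nbrsIn_pos_iff {v : V} {S : Finset V} : 0 < nbrsIn G v S ↔ ∃ w ∈ S, G.Adj v w := by
  simp [Nat.pos_iff_ne_zero, nbrsIn_eq_zero_iff]

theorem nbrsIn_eq_card_iff {v : V} {S : Finset V} : nbrsIn G v S = #S ↔ ∀ w ∈ S, G.Adj v w := by
  classical
  exact card_filter_eq_iff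

theorem nbrsIn_congr {H : SimpleGraph V} {v v' : V} {S : Finset V}
    (h : ∀ w ∈ S, G.Adj v w ↔ H.Adj v' w) : nbrsIn G v S = nbrsIn H v' S := by
  classical
  unfold nbrsIn
  congr 1
  exact filter_congr h

theorem nbrsIn_add_nbrsIn_of_adj_iff_not {H : SimpleGraph V} {v : V} {S : Finset V}
    (h : ∀ w ∈ S, H.Adj v w ↔ ¬ G.Adj v w) : nbrsIn H v S + nbrsIn G v S = #S := by
  classical
  rw [nbrsIn, nbrsIn, filter_congr h, add_comm]
  exact card_filter_add_card_filter_not _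

theorem sum_nbrsIn_comm (S T : Finset V) :
    ∑ v ∈ S, nbrsIn G v T = ∑ w ∈ T, nbrsIn G w S := by
  classical
  simp only [nbrsIn, card_filter]
  rw [sum_comm]
  simp [G.adj_comm]

variable [DecidableEq V]

theorem nbrsIn_union (v : V) {S T : Finset V} (h : Disjoint S T) :
    nbrsIn G v (S ∪ T) = nbrsIn G v S + nbrsIn G v T := by
  classical
  rw [nbrsIn, filter_union, card_union_of_disjoint (disjoint_filter_filter h)]
  rfl

theorem nbrsIn_add_nbrsIn_sdiff (v : V) {S T : Finset V} (h : S ⊆ T) :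
    nbrsIn G v S + nbrsIn G v (T \ S) = nbrsIn G v T := by
  rw [← nbrsIn_union G v disjoint_sdiff, union_sdiff_of_subset h]

theorem nbrsIn_biUnion {ι : Type*} (v : V) (I : Finset ι) {t : ι → Finset V}
    (h : (I : Set ι).PairwiseDisjoint t) :
    nbrsIn G v (I.biUnion t) = ∑ i ∈ I, nbrsIn G v (t i) := by
  classical
  rw [nbrsIn, filter_biUnion, card_biUnion]
  · rfl
  · exact fun i hi j hj hij => disjoint_filter_filter (h hi hj hij)

end NbrsIn

namespace IsBiRegularBipartition

variable {V : Type*} [Fintype V] [DecidableEq V] {G : SimpleGraph V} {U W : Finset V}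
  {du dw : ℕ}

theorem symm (h : IsBiRegularBipartition G U W du dw) : IsBiRegularBipartition G W U dw du :=
  ⟨by rw [union_comm, h.1], by rw [inter_comm, h.2.1], fun u v huv => (h.2.2.1 u v huv).symm,
    h.2.2.2.2, h.2.2.2.1⟩

theorem mem_right_iff (h : IsBiRegularBipartition G U W du dw) {v : V} : v ∈ W ↔ v ∉ U := by
  have hv : v ∈ U ∪ W := h.1 ▸ mem_univ v
  have hUW : v ∉ U ∩ W := h.2.1 ▸ notMem_empty v
  simp only [mem_union, mem_inter] at hv hUW
  tauto

theorem nbrsIn_univ_of_mem_left (h : IsBiRegularBipartition G U W du dw) {u : V} (hu : u ∈ U) :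
    nbrsIn G u univ = du :=
  h.2.2.2.1 u hu

theorem mem_right_of_adj (h : IsBiRegularBipartition G U W du dw) {u v : V} (hu : u ∈ U)
    (huv : G.Adj u v) : v ∈ W := by
  rcases h.2.2.1 u v huv with ⟨-, hv⟩ | ⟨hu', -⟩
  · exact hv
  · exact absurd hu (h.mem_right_iff.1 hu')

theorem mem_left_iff_of_adj (h : IsBiRegularBipartition G U W du dw) {u v : V}
    (huv : G.Adj u v) : u ∈ U ↔ v ∉ U := by
  rcases h.2.2.1 u v huv with ⟨hu, hv⟩ | ⟨hu, hv⟩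
  · exact iff_of_true hu (h.mem_right_iff.1 hv)
  · exact iff_of_false (h.mem_right_iff.1 hu) (not_not.2 hv)

theorem symmDiff_right_eq_compl (h : IsBiRegularBipartition G U W du dw) (B : Finset V) :
    symmDiff W B = (symmDiff U B)ᶜ := by
  ext v
  simp only [mem_symmDiff, mem_compl, h.mem_right_iff]
  tauto

theorem card_inter_add_card_inter (h : IsBiRegularBipartition G U W du dw) (S : Finset V) :
    #(U ∩ S) + #(W ∩ S) = #S := by
  rw [← card_union_of_disjoint, ← union_inter_distrib_right, h.1, univ_inter]
  exact disjoint_left.2 fun v hU hW => h.mem_right_iff.1 (mem_inter.1 hW).1 (mem_inter.1 hU).1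

theorem nbrsIn_inter_right (h : IsBiRegularBipartition G U W du dw) {u : V} (hu : u ∈ U)
    (S : Finset V) : nbrsIn G u (W ∩ S) = nbrsIn G u S := by
  rw [← nbrsIn_add_nbrsIn_sdiff G u (inter_subset_right : W ∩ S ⊆ S), left_eq_add,
    nbrsIn_eq_zero_iff]
  intro w hw huw
  exact (mem_sdiff.1 hw).2 (mem_inter.2 ⟨h.mem_right_of_adj hu huw, (mem_sdiff.1 hw).1⟩)

end IsBiRegularBipartition

section GodsilMcKay

variable {V : Type*} [Fintype V] {G : SimpleGraph V} {ℓ : ℕ} {f : V → Option (Fin ℓ)}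

@[simp]
theorem mem_Xset {v : V} {i : Fin ℓ} : v ∈ Xset f i ↔ f v = some i := by
  simp [Xset]

@[simp]
theorem mem_Yset {v : V} : v ∈ Yset f ↔ f v = none := by
  simp [Yset]

theorem pairwiseDisjoint_Xset (s : Set (Fin ℓ)) : s.PairwiseDisjoint (Xset f) :=
  fun i _ j _ hij => disjoint_left.2 fun v hi hj => hij (by simp_all)

theorem gmFlip.ne {u v : V} (h : gmFlip G f u v) : u ≠ v := by
  rintro rfl
  rcases h with ⟨i, hu, hu', -⟩ | ⟨i, hu, hu', -⟩ <;> simp_all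

theorem gmSwitch_adj_iff {u v : V} :
    (gmSwitch G f).Adj u v ↔ (G.Adj u v ↔ ¬ gmFlip G f u v) := by
  have : gmFlip G f u v → u ≠ v := gmFlip.ne
  simp only [gmSwitch]
  tauto

open scoped Classical in
noncomputable def flipSet (G : SimpleGraph V) (f : V → Option (Fin ℓ)) (i : Fin ℓ) : Finset V :=
  (Yset f).filter fun y => 2 * nbrsIn G y (Xset f i) = #(Xset f i)

theorem mem_flipSet {y : V} {i : Fin ℓ} :
    y ∈ flipSet G f i ↔ f y = none ∧ 2 * nbrsIn G y (Xset f i) = #(Xset f i) := by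
  simp [flipSet]

theorem gmFlip_iff_mem_flipSet {x v : V} {i : Fin ℓ} (hx : f x = some i) :
    gmFlip G f x v ↔ v ∈ flipSet G f i := by
  simp [gmFlip, mem_flipSet, hx]

theorem nbrsIn_univ_eq_add_sum (G : SimpleGraph V) (f : V → Option (Fin ℓ)) (v : V) :
    nbrsIn G v univ = nbrsIn G v (Yset f) + ∑ j, nbrsIn G v (Xset f j) := by
  classical
  rw [nbrsIn, card_eq_sum_card_fiberwise (f := f) (t := univ) (fun v _ => mem_univ (f v)),
    Fintype.sum_option]
  simp only [nbrsIn, Yset, Xset, filter_filter]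
  congr 1
  · exact congrArg card (filter_congr fun _ _ => and_comm)
  · exact sum_congr rfl fun _ _ => congrArg card (filter_congr fun _ _ => and_comm)

theorem adj_iff_adj_of_notMem_flipSet (hf : IsGMPartition G f) {y x x' : V} {i : Fin ℓ}
    (hy : f y = none) (hyS : y ∉ flipSet G f i) (hx : x ∈ Xset f i) (hx' : x' ∈ Xset f i) :
    G.Adj y x ↔ G.Adj y x' := by
  rcases hf.1 y (mem_Yset.2 hy) i with h0 | hhalf | hall
  · rw [nbrsIn_eq_zero_iff] at h0
    exact iff_of_false (h0 x hx) (h0 x' hx')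
  · exact absurd (mem_flipSet.2 ⟨hy, hhalf⟩) hyS
  · rw [nbrsIn_eq_card_iff] at hall
    exact iff_of_true (hall x hx) (hall x' hx')

theorem exists_adj_of_mem_flipSet {y x : V} {i : Fin ℓ} (hy : y ∈ flipSet G f i)
    (hx : x ∈ Xset f i) : ∃ x' ∈ Xset f i, G.Adj y x' := by
  have := (mem_flipSet.1 hy).2
  have := card_pos.2 ⟨x, hx⟩
  exact (nbrsIn_pos_iff G).1 (by omega)

variable [DecidableEq V]

theorem nbrsIn_gmSwitch_add_two_mul {x : V} {F : Finset V} (hF : ∀ v, gmFlip G f x v ↔ v ∈ F) :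
    nbrsIn (gmSwitch G f) x univ + 2 * nbrsIn G x F = nbrsIn G x univ + #F := by
  have hin : nbrsIn (gmSwitch G f) x F + nbrsIn G x F = #F :=
    nbrsIn_add_nbrsIn_of_adj_iff_not G fun v hv => by
      simp only [gmSwitch_adj_iff, (hF v).2 hv]; tauto
  have hout : nbrsIn (gmSwitch G f) x (univ \ F) = nbrsIn G x (univ \ F) :=
    nbrsIn_congr _ fun v hv => by
      rw [gmSwitch_adj_iff, hF v]; simp_all
  rw [← nbrsIn_add_nbrsIn_sdiff G x (subset_univ F),
    ← nbrsIn_add_nbrsIn_sdiff (gmSwitch G f) x (subset_univ F)]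
  omega

theorem nbrsIn_gmSwitch_add_two_mul_flipSet {x : V} {i : Fin ℓ} (hx : f x = some i) :
    nbrsIn (gmSwitch G f) x univ + 2 * nbrsIn G x (flipSet G f i) =
      nbrsIn G x univ + #(flipSet G f i) :=
  nbrsIn_gmSwitch_add_two_mul fun _ => gmFlip_iff_mem_flipSet hx

theorem nbrsIn_gmSwitch_of_mem_Yset {y : V} (hy : f y = none) :
    nbrsIn (gmSwitch G f) y univ = nbrsIn G y univ := by
  set I := univ.filter fun i => 2 * nbrsIn G y (Xset f i) = #(Xset f i)
  have hF : ∀ v, gmFlip G f y v ↔ v ∈ I.biUnion (Xset f) := fun v => by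
    simp [gmFlip, hy, I, and_comm]
  have hhalf : 2 * nbrsIn G y (I.biUnion (Xset f)) = #(I.biUnion (Xset f)) := by
    rw [nbrsIn_biUnion G y I (pairwiseDisjoint_Xset _), card_biUnion (pairwiseDisjoint_Xset _),
      mul_sum]
    exact sum_congr rfl fun i hi => (mem_filter.1 hi).2
  have := nbrsIn_gmSwitch_add_two_mul hF
  omega

variable (hf : IsGMPartition G f)
include hf

theorem nbrsIn_univ_add_nbrsIn_flipSet {x x' : V} {i : Fin ℓ} (hx : x ∈ Xset f i)
    (hx' : x' ∈ Xset f i) :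
    nbrsIn G x univ + nbrsIn G x' (flipSet G f i) =
      nbrsIn G x' univ + nbrsIn G x (flipSet G f i) := by
  have hS : flipSet G f i ⊆ Yset f := filter_subset _ _
  have hrest : nbrsIn G x (Yset f \ flipSet G f i) = nbrsIn G x' (Yset f \ flipSet G f i) :=
    nbrsIn_congr G fun y hy => by
      rw [mem_sdiff, mem_Yset] at hy
      rw [G.adj_comm, G.adj_comm x', adj_iff_adj_of_notMem_flipSet hf hy.1 hy.2 hx hx']
  have hX : ∑ j, nbrsIn G x (Xset f j) = ∑ j, nbrsIn G x' (Xset f j) :=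
    sum_congr rfl fun j _ => hf.2 i j x hx x' hx'
  rw [nbrsIn_univ_eq_add_sum G f x, nbrsIn_univ_eq_add_sum G f x',
    ← nbrsIn_add_nbrsIn_sdiff G x hS, ← nbrsIn_add_nbrsIn_sdiff G x' hS]
  omega

theorem nbrsIn_gmSwitch_of_forall_nbrsIn_univ_eq {x : V} {i : Fin ℓ} (hx : x ∈ Xset f i)
    (hdeg : ∀ x' ∈ Xset f i, nbrsIn G x' univ = nbrsIn G x univ) :
    nbrsIn (gmSwitch G f) x univ = nbrsIn G x univ := by
  have hconst : ∀ x' ∈ Xset f i, nbrsIn G x' (flipSet G f i) = nbrsIn G x (flipSet G f i) := by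
    intro x' hx'
    have := nbrsIn_univ_add_nbrsIn_flipSet hf hx hx'
    rw [hdeg x' hx'] at this
    omega
  have hcount :
      #(Xset f i) * (2 * nbrsIn G x (flipSet G f i)) = #(Xset f i) * #(flipSet G f i) := by
    calc #(Xset f i) * (2 * nbrsIn G x (flipSet G f i))
        = 2 * ∑ x' ∈ Xset f i, nbrsIn G x' (flipSet G f i) := by
          rw [sum_congr rfl hconst, sum_const, smul_eq_mul]; ring
      _ = ∑ y ∈ flipSet G f i, 2 * nbrsIn G y (Xset f i) := by rw [sum_nbrsIn_comm, mul_sum]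
      _ = #(Xset f i) * #(flipSet G f i) := by
          rw [sum_congr rfl fun y hy => (mem_flipSet.1 hy).2, sum_const, smul_eq_mul, mul_comm]
  have hhalf := Nat.eq_of_mul_eq_mul_left (card_pos.2 ⟨x, hx⟩) hcount
  have := nbrsIn_gmSwitch_add_two_mul_flipSet (G := G) (mem_Xset.1 hx)
  omega

end GodsilMcKay

section Bipartite

variable {V : Type*} [Fintype V] [DecidableEq V] {G : SimpleGraph V} {U W : Finset V}
  {du dw : ℕ} {ℓ : ℕ} {f : V → Option (Fin ℓ)}

theorem card_le_two_mul_card_inter_of_mem_flipSet (h : IsBiRegularBipartition G U W du dw)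
    {y : V} {i : Fin ℓ} (hy : y ∈ flipSet G f i) (hyW : y ∈ W) :
    #(Xset f i) ≤ 2 * #(U ∩ Xset f i) := by
  rw [← (mem_flipSet.1 hy).2, ← h.symm.nbrsIn_inter_right hyW]
  exact Nat.mul_le_mul_left 2 (nbrsIn_le_card G y _)

theorem nbrsIn_flipSet_eq_zero_of_two_mul_lt (h : IsBiRegularBipartition G U W du dw)
    {x : V} {i : Fin ℓ} (hx : x ∈ U) (hlt : 2 * #(U ∩ Xset f i) < #(Xset f i)) :
    nbrsIn G x (flipSet G f i) = 0 :=
  (nbrsIn_eq_zero_iff G).2 fun y hy hxy => by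
    have := card_le_two_mul_card_inter_of_mem_flipSet h hy (h.mem_right_of_adj hx hxy)
    omega

theorem le_of_two_mul_card_inter_lt (h : IsBiRegularBipartition G U W du dw)
    (hf : IsGMPartition G f) {u : V} {i : Fin ℓ} (hu : u ∈ U) (hui : u ∈ Xset f i)
    (hlt : 2 * #(U ∩ Xset f i) < #(Xset f i)) : du ≤ dw := by
  have hsplit := h.card_inter_add_card_inter (Xset f i)
  obtain ⟨w, hw⟩ : (W ∩ Xset f i).Nonempty := card_pos.1 (by omega)
  have := nbrsIn_univ_add_nbrsIn_flipSet hf hui (mem_inter.1 hw).2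
  rw [h.nbrsIn_univ_of_mem_left hu, h.symm.nbrsIn_univ_of_mem_left (mem_inter.1 hw).1,
    nbrsIn_flipSet_eq_zero_of_two_mul_lt h hu hlt] at this
  omega

theorem lt_of_adj_mem_flipSet (h : IsBiRegularBipartition G U W du dw) (hf : IsGMPartition G f)
    {y u w : V} {i : Fin ℓ} (hy : y ∈ flipSet G f i) (hyu : G.Adj y u) (hu : u ∈ U)
    (hui : u ∈ Xset f i) (hw : w ∈ W) (hwi : w ∈ Xset f i)
    (hlt : 2 * #(W ∩ Xset f i) < #(Xset f i)) : dw < du := by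
  have := nbrsIn_univ_add_nbrsIn_flipSet hf hui hwi
  have hpos : 0 < nbrsIn G u (flipSet G f i) := (nbrsIn_pos_iff G).2 ⟨y, hy, hyu.symm⟩
  rw [h.nbrsIn_univ_of_mem_left hu, h.symm.nbrsIn_univ_of_mem_left hw,
    nbrsIn_flipSet_eq_zero_of_two_mul_lt h.symm hw hlt] at this
  omega

theorem nbrsIn_Yset_eq_zero (h : IsBiRegularBipartition G U W du dw) (hf : IsGMPartition G f)
    {u w : V} {i : Fin ℓ} (hu : u ∈ U) (hui : u ∈ Xset f i) (hw : w ∈ W) (hwi : w ∈ Xset f i)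
    (hlt : 2 * #(W ∩ Xset f i) < #(Xset f i)) : nbrsIn G w (Yset f) = 0 :=
  (nbrsIn_eq_zero_iff G).2 fun y hy hwy => by
    have hyU := h.symm.mem_right_of_adj hw hwy
    by_cases hyS : y ∈ flipSet G f i
    · have := card_le_two_mul_card_inter_of_mem_flipSet h.symm hyS hyU
      omega
    · have hyu := (adj_iff_adj_of_notMem_flipSet hf (mem_Yset.1 hy) hyS hwi hui).1 hwy.symm
      exact h.mem_right_iff.1 (h.mem_right_of_adj hyU hyu) hu

theorem card_inter_mul_nbrsIn_eq (h : IsBiRegularBipartition G U W du dw)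
    (hf : IsGMPartition G f) {x z : V} {i j : Fin ℓ} (hx : x ∈ Xset f i) (hz : z ∈ Xset f j) :
    #(U ∩ Xset f i) * nbrsIn G x (Xset f j) = #(W ∩ Xset f j) * nbrsIn G z (Xset f i) := by
  calc #(U ∩ Xset f i) * nbrsIn G x (Xset f j)
      = ∑ x' ∈ U ∩ Xset f i, nbrsIn G x' (W ∩ Xset f j) := by
        rw [sum_congr rfl fun x' hx' => by
          rw [h.nbrsIn_inter_right (mem_inter.1 hx').1, hf.2 i j x' (mem_inter.1 hx').2 x hx],
          sum_const, smul_eq_mul]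
    _ = ∑ z' ∈ W ∩ Xset f j, nbrsIn G z' (U ∩ Xset f i) := sum_nbrsIn_comm G _ _
    _ = #(W ∩ Xset f j) * nbrsIn G z (Xset f i) := by
        rw [sum_congr rfl fun z' hz' => by
          rw [h.symm.nbrsIn_inter_right (mem_inter.1 hz').1, hf.2 j i z' (mem_inter.1 hz').2 z hz],
          sum_const, smul_eq_mul]

theorem card_inter_mul_card_inter_eq_of_adj (h : IsBiRegularBipartition G U W du dw)
    (hf : IsGMPartition G f) {x z : V} {i j : Fin ℓ} (hx : x ∈ Xset f i) (hz : z ∈ Xset f j)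
    (hxz : G.Adj x z) :
    #(U ∩ Xset f i) * #(U ∩ Xset f j) = #(W ∩ Xset f i) * #(W ∩ Xset f j) := by
  have hc : 0 < nbrsIn G x (Xset f j) := (nbrsIn_pos_iff G).2 ⟨z, hz, hxz⟩
  have hc' : 0 < nbrsIn G z (Xset f i) := (nbrsIn_pos_iff G).2 ⟨x, hx, hxz.symm⟩
  have e := card_inter_mul_nbrsIn_eq h hf hx hz
  have e' := card_inter_mul_nbrsIn_eq h.symm hf hx hz
  generalize nbrsIn G x (Xset f j) = c at hc e e'
  generalize nbrsIn G z (Xset f i) = c' at hc' e e'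
  refine Nat.eq_of_mul_eq_mul_right (Nat.mul_pos hc hc') ?_
  calc _ = (#(U ∩ Xset f i) * c) * (#(U ∩ Xset f j) * c') := by ring
    _ = (#(W ∩ Xset f j) * c') * (#(W ∩ Xset f i) * c) := by rw [e, ← e']
    _ = _ := by ring

theorem Xset_subset_of_mem_flipSet (h : IsBiRegularBipartition G U W du dw)
    (hf : IsGMPartition G f) {y : V} {i : Fin ℓ} (hy : y ∈ flipSet G f i) (hyW : y ∈ W)
    (hlt : 2 * #(W ∩ Xset f i) < #(Xset f i)) : Xset f i ⊆ U := by
  intro w hwi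
  by_contra hwU
  have hw : w ∈ W := h.mem_right_iff.2 hwU
  obtain ⟨u, hui, hyu⟩ := exists_adj_of_mem_flipSet hy hwi
  have hu : u ∈ U := h.symm.mem_right_of_adj hyW hyu
  have hdwdu := lt_of_adj_mem_flipSet h hf hy hyu hu hui hw hwi hlt
  have hdw : 0 < nbrsIn G w univ := by
    rw [h.symm.nbrsIn_univ_of_mem_left hw, ← h.symm.nbrsIn_univ_of_mem_left hyW]
    exact (nbrsIn_pos_iff G).2 ⟨u, mem_univ u, hyu⟩
  rw [nbrsIn_univ_eq_add_sum G f w, nbrsIn_Yset_eq_zero h hf hu hui hw hwi hlt, zero_add] at hdw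
  obtain ⟨j, -, hj⟩ := exists_ne_zero_of_sum_ne_zero hdw.ne'
  obtain ⟨x, hxj, hwx⟩ := (nbrsIn_pos_iff G).1 (Nat.pos_of_ne_zero hj)
  have hx : x ∈ U := h.symm.mem_right_of_adj hw hwx
  have hprod := card_inter_mul_card_inter_eq_of_adj h hf hwi hxj hwx
  have hsplit := h.card_inter_add_card_inter (Xset f i)
  have hsplit' := h.card_inter_add_card_inter (Xset f j)
  have hxU : 0 < #(U ∩ Xset f j) := card_pos.2 ⟨x, mem_inter.2 ⟨hx, hxj⟩⟩
  have hltj : 2 * #(U ∩ Xset f j) < #(Xset f j) := by nlinarith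
  exact absurd (le_of_two_mul_card_inter_lt h hf hx hxj hltj) (not_le.2 hdwdu)

theorem Xset_subset_of_mem_flipSet_of_two_mul_ne (h : IsBiRegularBipartition G U W du dw)
    (hf : IsGMPartition G f) {y x : V} {i : Fin ℓ} (hy : y ∈ flipSet G f i) (hx : x ∈ U)
    (hxi : x ∈ Xset f i) (hne : 2 * #(U ∩ Xset f i) ≠ #(Xset f i)) : Xset f i ⊆ U := by
  have hsplit := h.card_inter_add_card_inter (Xset f i)
  by_cases hyU : y ∈ U
  · have := card_le_two_mul_card_inter_of_mem_flipSet h.symm hy hyU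
    have hXW := Xset_subset_of_mem_flipSet h.symm hf hy hyU (by omega)
    exact absurd hx (h.mem_right_iff.1 (hXW hxi))
  · have := card_le_two_mul_card_inter_of_mem_flipSet h hy (h.mem_right_iff.2 hyU)
    exact Xset_subset_of_mem_flipSet h hf hy (h.mem_right_iff.2 hyU) (by omega)

theorem adj_of_mem_flipSet_of_two_mul_eq (h : IsBiRegularBipartition G U W du dw)
    {y x : V} {i : Fin ℓ} (hy : y ∈ flipSet G f i) (hyW : y ∈ W)
    (hbal : 2 * #(U ∩ Xset f i) = #(Xset f i)) (hx : x ∈ U) (hxi : x ∈ Xset f i) : G.Adj y x := by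
  have hhalf := (mem_flipSet.1 hy).2
  rw [← h.symm.nbrsIn_inter_right hyW] at hhalf
  exact (nbrsIn_eq_card_iff G).1 (by omega) x (mem_inter.2 ⟨hx, hxi⟩)

theorem nbrsIn_flipSet_of_two_mul_eq (h : IsBiRegularBipartition G U W du dw) {u : V}
    {i : Fin ℓ} (hbal : 2 * #(U ∩ Xset f i) = #(Xset f i)) (hu : u ∈ U) (hui : u ∈ Xset f i) :
    nbrsIn G u (flipSet G f i) = #(W ∩ flipSet G f i) := by
  rw [← h.nbrsIn_inter_right hu, nbrsIn_eq_card_iff]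
  intro y hy
  exact (adj_of_mem_flipSet_of_two_mul_eq h (mem_inter.1 hy).2 (mem_inter.1 hy).1 hbal hu hui).symm

theorem nbrsIn_gmSwitch_of_two_mul_eq (h : IsBiRegularBipartition G U W du dw)
    (hf : IsGMPartition G f) {u : V} {i : Fin ℓ} (hbal : 2 * #(U ∩ Xset f i) = #(Xset f i))
    (hu : u ∈ U) (hui : u ∈ Xset f i) : nbrsIn (gmSwitch G f) u univ = dw := by
  have hm := card_pos.2 ⟨u, hui⟩
  have hsplit := h.card_inter_add_card_inter (Xset f i)
  obtain ⟨w, hw⟩ : (W ∩ Xset f i).Nonempty := card_pos.1 (by omega)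
  have hbal' : 2 * #(W ∩ Xset f i) = #(Xset f i) := by omega
  have hdeg := nbrsIn_univ_add_nbrsIn_flipSet hf hui (mem_inter.1 hw).2
  rw [h.nbrsIn_univ_of_mem_left hu, h.symm.nbrsIn_univ_of_mem_left (mem_inter.1 hw).1,
    nbrsIn_flipSet_of_two_mul_eq h hbal hu hui,
    nbrsIn_flipSet_of_two_mul_eq h.symm hbal' (mem_inter.1 hw).1 (mem_inter.1 hw).2] at hdeg
  have hswitch := nbrsIn_gmSwitch_add_two_mul_flipSet (G := G) (mem_Xset.1 hui)
  rw [nbrsIn_flipSet_of_two_mul_eq h hbal hu hui, h.nbrsIn_univ_of_mem_left hu] at hswitch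
  have := h.card_inter_add_card_inter (flipSet G f i)
  omega

end Bipartite

section BalancedSet

variable {V : Type*} [Fintype V] [DecidableEq V] {ℓ : ℕ} {f : V → Option (Fin ℓ)}

def balancedSet (f : V → Option (Fin ℓ)) (U : Finset V) : Finset V :=
  (univ.filter fun i => 2 * #(U ∩ Xset f i) = #(Xset f i)).biUnion (Xset f)

theorem mem_balancedSet {U : Finset V} {v : V} {i : Fin ℓ} (hv : v ∈ Xset f i) :
    v ∈ balancedSet f U ↔ 2 * #(U ∩ Xset f i) = #(Xset f i) := by
  rw [mem_Xset] at hv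
  simp [balancedSet, hv]

theorem notMem_balancedSet_of_eq_none {U : Finset V} {v : V} (hv : f v = none) :
    v ∉ balancedSet f U := by
  simp [balancedSet, hv]

variable {G : SimpleGraph V} {U W : Finset V} {du dw : ℕ}

theorem IsBiRegularBipartition.balancedSet_symm (h : IsBiRegularBipartition G U W du dw) :
    balancedSet f W = balancedSet f U := by
  unfold balancedSet
  congr 1
  ext i
  have := h.card_inter_add_card_inter (Xset f i)
  simp only [mem_filter, mem_univ, true_and]
  omega

theorem IsBiRegularBipartition.card_symmDiff_balancedSet
    (h : IsBiRegularBipartition G U W du dw) : #(symmDiff U (balancedSet f U)) = #U := by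
  have hinter : #(U ∩ balancedSet f U) = #(W ∩ balancedSet f U) := by
    simp only [balancedSet, inter_biUnion]
    rw [card_biUnion, card_biUnion]
    · refine sum_congr rfl fun i hi => ?_
      have := h.card_inter_add_card_inter (Xset f i)
      have := (mem_filter.1 hi).2
      omega
    all_goals exact (pairwiseDisjoint_Xset _).mono fun _ => inter_subset_right
  have hsdiff : balancedSet f U \ U = W ∩ balancedSet f U := by
    ext v
    simp only [mem_sdiff, mem_inter, h.mem_right_iff]
    tauto
  rw [symmDiff_def, sup_eq_union, card_union_of_disjoint disjoint_sdiff_sdiff, hsdiff, ← hinter,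
    card_sdiff_add_card_inter]

end BalancedSet

section Switching

variable {V : Type*} [Fintype V] [DecidableEq V] {G : SimpleGraph V} {U W : Finset V}
  {du dw : ℕ} {ℓ : ℕ} {f : V → Option (Fin ℓ)}

theorem nbrsIn_gmSwitch_of_notMem_balancedSet (h : IsBiRegularBipartition G U W du dw)
    (hf : IsGMPartition G f) {v : V} (hv : v ∈ U) (hvB : v ∉ balancedSet f U) :
    nbrsIn (gmSwitch G f) v univ = du := by
  rw [← h.nbrsIn_univ_of_mem_left hv]
  cases hfv : f v with
  | none => exact nbrsIn_gmSwitch_of_mem_Yset hfv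
  | some i =>
    have hvi : v ∈ Xset f i := mem_Xset.2 hfv
    have hswitch := nbrsIn_gmSwitch_add_two_mul_flipSet (G := G) hfv
    obtain hS | ⟨y, hy⟩ := (flipSet G f i).eq_empty_or_nonempty
    · have := nbrsIn_le_card G v (flipSet G f i)
      rw [hS, card_empty] at hswitch this
      omega
    · have hXU := Xset_subset_of_mem_flipSet_of_two_mul_ne h hf hy hv hvi
        ((mem_balancedSet hvi).not.1 hvB)
      exact nbrsIn_gmSwitch_of_forall_nbrsIn_univ_eq hf hvi fun x hx => by
        rw [h.nbrsIn_univ_of_mem_left (hXU hx), h.nbrsIn_univ_of_mem_left hv]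

theorem nbrsIn_gmSwitch_of_mem_symmDiff (h : IsBiRegularBipartition G U W du dw)
    (hf : IsGMPartition G f) {v : V} (hv : v ∈ symmDiff U (balancedSet f U)) :
    nbrsIn (gmSwitch G f) v univ = du := by
  rcases mem_symmDiff.1 hv with ⟨hvU, hvB⟩ | ⟨hvB, hvU⟩
  · exact nbrsIn_gmSwitch_of_notMem_balancedSet h hf hvU hvB
  · obtain ⟨i, -, hvi⟩ := mem_biUnion.1 hvB
    have hsplit := h.card_inter_add_card_inter (Xset f i)
    have hbal := (mem_balancedSet hvi).1 hvB
    exact nbrsIn_gmSwitch_of_two_mul_eq h.symm hf (by omega) (h.mem_right_iff.2 hvU) hvi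

theorem two_mul_card_inter_eq_of_adj (h : IsBiRegularBipartition G U W du dw)
    (hf : IsGMPartition G f) {x z : V} {i j : Fin ℓ} (hx : x ∈ Xset f i) (hz : z ∈ Xset f j)
    (hxz : G.Adj x z) (hbal : 2 * #(U ∩ Xset f i) = #(Xset f i)) :
    2 * #(U ∩ Xset f j) = #(Xset f j) := by
  have hprod := card_inter_mul_card_inter_eq_of_adj h hf hx hz hxz
  have := h.card_inter_add_card_inter (Xset f i)
  have := h.card_inter_add_card_inter (Xset f j)
  have := card_pos.2 ⟨x, hx⟩
  rw [show #(U ∩ Xset f i) = #(W ∩ Xset f i) by omega] at hprod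
  have := Nat.eq_of_mul_eq_mul_left (by omega) hprod
  omega

theorem notMem_balancedSet_of_adj (h : IsBiRegularBipartition G U W du dw)
    (hf : IsGMPartition G f) {y x : V} {i : Fin ℓ} (hy : f y = none) (hyS : y ∉ flipSet G f i)
    (hxi : x ∈ Xset f i) (hyx : G.Adj y x) : x ∉ balancedSet f U := by
  have hall : ∀ x' ∈ Xset f i, G.Adj y x' := fun x' hx' =>
    (adj_iff_adj_of_notMem_flipSet hf hy hyS hxi hx').1 hyx
  have hsplit := h.card_inter_add_card_inter (Xset f i)
  have hm := card_pos.2 ⟨x, hxi⟩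
  rw [mem_balancedSet hxi]
  by_cases hyU : y ∈ U
  · have : U ∩ Xset f i = ∅ := eq_empty_of_forall_notMem fun x' hx' =>
      h.mem_right_iff.1 (h.mem_right_of_adj hyU (hall x' (mem_inter.1 hx').2)) (mem_inter.1 hx').1
    rw [this, card_empty]
    omega
  · have : W ∩ Xset f i = ∅ := eq_empty_of_forall_notMem fun x' hx' =>
      h.mem_right_iff.1 (mem_inter.1 hx').1
        (h.symm.mem_right_of_adj (h.mem_right_iff.2 hyU) (hall x' (mem_inter.1 hx').2))
    rw [this, card_empty] at hsplit
    omega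

theorem mem_balancedSet_iff_of_adj (h : IsBiRegularBipartition G U W du dw)
    (hf : IsGMPartition G f) {u v : V} (huv : G.Adj u v) (hflip : ¬ gmFlip G f u v) :
    u ∈ balancedSet f U ↔ v ∈ balancedSet f U := by
  cases hu : f u with
  | none =>
    cases hv : f v with
    | none =>
      exact iff_of_false (notMem_balancedSet_of_eq_none hu) (notMem_balancedSet_of_eq_none hv)
    | some j =>
      refine iff_of_false (notMem_balancedSet_of_eq_none hu)
        (notMem_balancedSet_of_adj h hf hu (fun hS => hflip ?_) (mem_Xset.2 hv) huv)
      exact Or.inl ⟨j, hu, hv, (mem_flipSet.1 hS).2⟩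
  | some i =>
    cases hv : f v with
    | none =>
      refine iff_of_false (notMem_balancedSet_of_adj h hf hv (fun hS => hflip ?_) (mem_Xset.2 hu)
        huv.symm) (notMem_balancedSet_of_eq_none hv)
      exact Or.inr ⟨i, hv, hu, (mem_flipSet.1 hS).2⟩
    | some j =>
      rw [mem_balancedSet (mem_Xset.2 hu), mem_balancedSet (mem_Xset.2 hv)]
      exact ⟨two_mul_card_inter_eq_of_adj h hf (mem_Xset.2 hu) (mem_Xset.2 hv) huv,
        two_mul_card_inter_eq_of_adj h hf (mem_Xset.2 hv) (mem_Xset.2 hu) huv.symm⟩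

theorem mem_balancedSet_iff_of_mem_flipSet (h : IsBiRegularBipartition G U W du dw)
    (hf : IsGMPartition G f) {y x : V} {i : Fin ℓ} (hy : y ∈ flipSet G f i) (hyW : y ∈ W)
    (hxi : x ∈ Xset f i) (hyx : ¬ G.Adj y x) : x ∈ balancedSet f U ↔ x ∈ W := by
  have hsplit := h.card_inter_add_card_inter (Xset f i)
  rw [mem_balancedSet hxi]
  rcases (card_le_two_mul_card_inter_of_mem_flipSet h hy hyW).lt_or_eq with hlt | heq
  · have hXU := Xset_subset_of_mem_flipSet h hf hy hyW (by omega)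
    exact iff_of_false (by omega) fun hx => h.mem_right_iff.1 hx (hXU hxi)
  · refine iff_of_true heq.symm (h.mem_right_iff.2 fun hx => hyx ?_)
    exact adj_of_mem_flipSet_of_two_mul_eq h hy hyW heq.symm hx hxi

theorem mem_symmDiff_iff_of_mem_flipSet (h : IsBiRegularBipartition G U W du dw)
    (hf : IsGMPartition G f) {y x : V} {i : Fin ℓ} (hy : y ∈ flipSet G f i)
    (hxi : x ∈ Xset f i) (hyx : ¬ G.Adj y x) :
    y ∈ symmDiff U (balancedSet f U) ↔ x ∉ symmDiff U (balancedSet f U) := by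
  have hyB := notMem_balancedSet_of_eq_none (U := U) (mem_flipSet.1 hy).1
  by_cases hyU : y ∈ U
  · have hx := mem_balancedSet_iff_of_mem_flipSet h.symm hf hy hyU hxi hyx
    rw [h.balancedSet_symm] at hx
    simp only [mem_symmDiff]
    tauto
  · have hx := mem_balancedSet_iff_of_mem_flipSet h hf hy (h.mem_right_iff.2 hyU) hxi hyx
    rw [h.mem_right_iff] at hx
    simp only [mem_symmDiff]
    tauto

theorem mem_symmDiff_iff_of_gmSwitch_adj (h : IsBiRegularBipartition G U W du dw)
    (hf : IsGMPartition G f) {u v : V} (huv : (gmSwitch G f).Adj u v) :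
    u ∈ symmDiff U (balancedSet f U) ↔ v ∉ symmDiff U (balancedSet f U) := by
  rw [gmSwitch_adj_iff] at huv
  by_cases hflip : gmFlip G f u v
  · have hnadj : ¬ G.Adj u v := fun hadj => huv.1 hadj hflip
    rcases hflip with ⟨i, hu, hv, hhalf⟩ | ⟨i, hv, hu, hhalf⟩
    · exact mem_symmDiff_iff_of_mem_flipSet h hf (mem_flipSet.2 ⟨hu, hhalf⟩) (mem_Xset.2 hv) hnadj
    · have := mem_symmDiff_iff_of_mem_flipSet h hf (mem_flipSet.2 ⟨hv, hhalf⟩) (mem_Xset.2 hu)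
        (fun hadj => hnadj hadj.symm)
      tauto
  · have hadj : G.Adj u v := huv.2 hflip
    have hB := mem_balancedSet_iff_of_adj h hf hadj hflip
    have hU := h.mem_left_iff_of_adj hadj
    simp only [mem_symmDiff]
    tauto

end Switching

/-- If `G` is a `(du, dw)`-regular bipartite graph with bipartition `(U, W)` and `G'` is
obtained from `G` by a Godsil–McKay switching, then `G'` is also a `(du, dw)`-regular
bipartite graph with the same degree sequences: there is a bipartition `(U', W')` of the
vertex set with `|U'| = |U|` and `|W'| = |W|` such that every edge of `G'` joins `U'` to `W'`,
every vertex of `U'` has degree `du` in `G'`, and every vertex of `W'` has degree `dw`. -/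
theorem godsilMcKay_preserves_biregular {V : Type*} [Fintype V] [DecidableEq V]
    (G : SimpleGraph V) (U W : Finset V) (du dw : ℕ)
    (hG : IsBiRegularBipartition G U W du dw)
    {ℓ : ℕ} (f : V → Option (Fin ℓ)) (hf : IsGMPartition G f) :
    ∃ U' W' : Finset V, U'.card = U.card ∧ W'.card = W.card ∧
      IsBiRegularBipartition (gmSwitch G f) U' W' du dw := by
  have hB := hG.balancedSet_symm (f := f)
  have hW' := hG.symmDiff_right_eq_compl (balancedSet f U)
  refine ⟨symmDiff U (balancedSet f U), symmDiff W (balancedSet f U),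
    hG.card_symmDiff_balancedSet, hB ▸ hG.symm.card_symmDiff_balancedSet,
    by rw [hW', union_compl], by rw [hW', inter_compl], fun u v huv => ?_,
    fun u hu => nbrsIn_gmSwitch_of_mem_symmDiff hG hf hu,
    fun w hw => nbrsIn_gmSwitch_of_mem_symmDiff hG.symm hf (hB ▸ hw)⟩
  have := mem_symmDiff_iff_of_gmSwitch_adj hG hf huv
  rw [hW', mem_compl, mem_compl]
  tauto
end

section
/- Let G be a finite (d_u, d_w)-regular bipartite graph with bipartition (U, W) and let {X_1, …, X_ℓ, Y} be a Godsil–McKay switching partition of its vertex set. Suppose X_i and X_j (i ≠ j) are both of Type 3.2 and some vertex of X_i has a neighbor in X_j. Then if |X_i^1| > |X_i^2| one has |X_j^1| < |X_j^2|, and if |X_i^1| < |X_i^2| one has |X_j^1| > |X_j^2|. -/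
open Finset SimpleGraph Polynomial

/-! Let `u ∈ X_i` be adjacent to `v ∈ X_j`. All vertices of `X_i` have the same number `c > 0` of
neighbours in `X_j`, and all vertices of `X_j` the same number `d > 0` of neighbours in `X_i`. In a
bipartite graph a vertex of `X_i ∩ U` only sees `X_j ∩ W`, so counting the edges between these two
sets gives `|X_i ∩ U| c = |X_j ∩ W| d`, and likewise `|X_i ∩ W| c = |X_j ∩ U| d`. Hence
`|X_i ∩ U| > |X_i ∩ W|` if and only if `|X_j ∩ W| > |X_j ∩ U|`. -/

section

variable {V : Type*} {G : SimpleGraph V}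

lemma nbrsIn_pos_of_adj {u v : V} {S : Finset V} (hv : v ∈ S) (huv : G.Adj u v) :
    0 < nbrsIn G u S := by
  classical
  exact Finset.card_pos.2 ⟨v, Finset.mem_filter.2 ⟨hv, huv⟩⟩

lemma nbrsIn_inter_of_forall_adj_mem [DecidableEq V] {v : V} {S Q : Finset V}
    (hQ : ∀ w, G.Adj v w → w ∈ Q) :
    nbrsIn G v (S ∩ Q) = nbrsIn G v S := by
  classical
  unfold nbrsIn
  congr 1
  ext w
  simp only [Finset.mem_filter, Finset.mem_inter]
  exact ⟨fun ⟨⟨hS, _⟩, h⟩ => ⟨hS, h⟩, fun ⟨hS, h⟩ => ⟨⟨hS, hQ w h⟩, h⟩⟩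

/-- Both sides count the edges between `A ∩ P` and `B ∩ Q`. -/
lemma card_inter_mul_nbrsIn_eq_s4 [DecidableEq V] {A B P Q : Finset V}
    (hA : ∀ x ∈ A, ∀ x' ∈ A, nbrsIn G x B = nbrsIn G x' B)
    (hB : ∀ y ∈ B, ∀ y' ∈ B, nbrsIn G y A = nbrsIn G y' A)
    (hPQ : ∀ x ∈ P, ∀ y, G.Adj x y → y ∈ Q) (hQP : ∀ y ∈ Q, ∀ x, G.Adj y x → x ∈ P)
    {u v : V} (hu : u ∈ A) (hv : v ∈ B) :
    #(A ∩ P) * nbrsIn G u B = #(B ∩ Q) * nbrsIn G v A := by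
  classical
  refine Finset.card_mul_eq_card_mul G.Adj (fun x hx => ?_) (fun y hy => ?_)
  · obtain ⟨hxA, hxP⟩ := Finset.mem_inter.1 hx
    rw [← hA x hxA u hu, ← nbrsIn_inter_of_forall_adj_mem (hPQ x hxP)]
    unfold nbrsIn bipartiteAbove
    congr
  · obtain ⟨hyB, hyQ⟩ := Finset.mem_inter.1 hy
    rw [← hB y hyB v hv, ← nbrsIn_inter_of_forall_adj_mem (hQP y hyQ)]
    unfold nbrsIn bipartiteBelow
    congr 1
    ext x
    simp only [Finset.mem_filter, G.adj_comm]

end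

namespace IsBiRegularBipartition

variable {V : Type*} [Fintype V] [DecidableEq V] {G : SimpleGraph V} {U W : Finset V} {du dw : ℕ}
  {x y : V}

lemma mem_right_of_adj_s4 (hG : IsBiRegularBipartition G U W du dw) (hxy : G.Adj x y) (hx : x ∈ U) :
    y ∈ W := by
  obtain ⟨_, hdisj, hbip, _⟩ := hG
  rcases hbip x y hxy with ⟨_, hy⟩ | ⟨hxW, _⟩
  · exact hy
  · exact absurd (Finset.mem_inter.2 ⟨hx, hxW⟩) (hdisj ▸ Finset.notMem_empty x)

lemma mem_left_of_adj (hG : IsBiRegularBipartition G U W du dw) (hxy : G.Adj x y) (hx : x ∈ W) :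
    y ∈ U := by
  obtain ⟨_, hdisj, hbip, _⟩ := hG
  rcases hbip x y hxy with ⟨hxU, _⟩ | ⟨_, hy⟩
  · exact absurd (Finset.mem_inter.2 ⟨hxU, hx⟩) (hdisj ▸ Finset.notMem_empty x)
  · exact hy

end IsBiRegularBipartition

lemma lt_iff_lt_of_mul_eq_mul {a a' b b' c d : ℕ} (hc : 0 < c) (hd : 0 < d)
    (h : a * c = b * d) (h' : a' * c = b' * d) : a' < a ↔ b' < b := by
  rw [← Nat.mul_lt_mul_right hc, h, h', Nat.mul_lt_mul_right hd]

theorem gm_type32_adjacent_opposite_general {V : Type*} [Fintype V] [DecidableEq V]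
    (G : SimpleGraph V) (U W : Finset V) (du dw : ℕ)
    (hG : IsBiRegularBipartition G U W du dw)
    {ℓ : ℕ} (f : V → Option (Fin ℓ)) (hf : IsGMPartition G f)
    (i j : Fin ℓ)
    (hadj : ∃ u ∈ Xset f i, ∃ v ∈ Xset f j, G.Adj u v) :
    ((Xset f i ∩ U).card > (Xset f i ∩ W).card →
      (Xset f j ∩ U).card < (Xset f j ∩ W).card) ∧
    ((Xset f i ∩ U).card < (Xset f i ∩ W).card →
      (Xset f j ∩ U).card > (Xset f j ∩ W).card) := by
  obtain ⟨u, hu, v, hv, huv⟩ := hadj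
  have hUW := card_inter_mul_nbrsIn_eq_s4 (hf.2 i j) (hf.2 j i)
    (fun _ hx _ h => hG.mem_right_of_adj_s4 h hx) (fun _ hy _ h => hG.mem_left_of_adj h hy) hu hv
  have hWU := card_inter_mul_nbrsIn_eq_s4 (hf.2 i j) (hf.2 j i)
    (fun _ hx _ h => hG.mem_left_of_adj h hx) (fun _ hy _ h => hG.mem_right_of_adj_s4 h hy) hu hv
  have hc := nbrsIn_pos_of_adj hv huv
  have hd := nbrsIn_pos_of_adj hu huv.symm
  exact ⟨(lt_iff_lt_of_mul_eq_mul hc hd hUW hWU).1, (lt_iff_lt_of_mul_eq_mul hc hd hWU hUW).1⟩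

/-- Property P3: in a `(du, dw)`-regular bipartite graph with a Godsil–McKay switching
partition, if `X_i` and `X_j` are both of Type 3.2 and some vertex of `X_i` has a neighbor
in `X_j`, then `|X_i ∩ U| > |X_i ∩ W|` implies `|X_j ∩ U| < |X_j ∩ W|`, and
`|X_i ∩ U| < |X_i ∩ W|` implies `|X_j ∩ U| > |X_j ∩ W|`. -/
theorem gm_type32_adjacent_opposite {V : Type*} [Fintype V] [DecidableEq V]
    (G : SimpleGraph V) (U W : Finset V) (du dw : ℕ)
    (hG : IsBiRegularBipartition G U W du dw)
    {ℓ : ℕ} (f : V → Option (Fin ℓ)) (hf : IsGMPartition G f)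
    (i j : Fin ℓ) (hij : i ≠ j)
    (h32i : (Xset f i ∩ U).Nonempty ∧ (Xset f i ∩ W).Nonempty ∧
      (Xset f i ∩ U).card ≠ (Xset f i ∩ W).card)
    (h32j : (Xset f j ∩ U).Nonempty ∧ (Xset f j ∩ W).Nonempty ∧
      (Xset f j ∩ U).card ≠ (Xset f j ∩ W).card)
    (hadj : ∃ u ∈ Xset f i, ∃ v ∈ Xset f j, G.Adj u v) :
    ((Xset f i ∩ U).card > (Xset f i ∩ W).card →
      (Xset f j ∩ U).card < (Xset f j ∩ W).card) ∧
    ((Xset f i ∩ U).card < (Xset f i ∩ W).card →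
      (Xset f j ∩ U).card > (Xset f j ∩ W).card) :=
  gm_type32_adjacent_opposite_general G U W du dw hG f hf i j hadj
end
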